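/- arXiv:2507.06114 — 4 statements merged into one kernel-verified Lean document; each statement's English description precedes it below -/
import Mathlib

section
/- (Measurement stability.) Let α > 0 and S ⊆ Ω be measurable. Let y^δ ∈ Y, let (y_k) ⊆ Y with y_k → y^δ in Y, and for each k let x_k ∈ D(F) be a minimizer of J_{α,S,y_k} over D(F). Then (x_k) has a subsequence converging strongly in L²(Ω), and every strong limit of a convergent subsequence of (x_k) is a minimizer of J_{α,S,y^δ} over D(F). -/
open MeasureTheory Filter
open scoped RealInnerProductSpace ENNReal Topology

noncomputable section

/-- Weak sequential convergence in a real inner product space. -/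
def WeakConv {H : Type*} [NormedAddCommGroup H] [InnerProductSpace ℝ H]
    (u : ℕ → H) (x : H) : Prop :=
  ∀ z : H, Tendsto (fun k => ⟪u k, z⟫) atTop (𝓝 ⟪x, z⟫)

/-- The squared `L²` mass of (a representative of) `x : L²(Ω)` over the set `T`. -/
def sqInt {n : ℕ} (Ω : Set (Fin n → ℝ)) (T : Set (Fin n → ℝ))
    (x : Lp ℝ 2 (volume.restrict Ω)) : ℝ :=
  ∫ t in T, (x t) ^ 2 ∂(volume.restrict Ω)

/-- The Tikhonov-type functional
`J_{α,S,z}(x) = ‖F(x) − z‖² + α‖x − x*‖_{S⁺}² + ‖x − x*‖_{S⁻}²`. -/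
def J {n : ℕ} (Ω : Set (Fin n → ℝ)) {Y : Type*} [NormedAddCommGroup Y]
    [InnerProductSpace ℝ Y]
    (F : Lp ℝ 2 (volume.restrict Ω) → Y) (xstar : Lp ℝ 2 (volume.restrict Ω))
    (α : ℝ) (S : Set (Fin n → ℝ)) (z : Y) (x : Lp ℝ 2 (volume.restrict Ω)) : ℝ :=
  ‖F x - z‖ ^ 2 + (α * sqInt Ω S (x - xstar) + sqInt Ω (Ω \ S) (x - xstar))

/-- `x` is a minimizer of the functional `Jf` over the set `D`. -/
def IsMinimizer {X' : Type*} (Jf : X' → ℝ) (D : Set X') (x : X') : Prop :=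
  x ∈ D ∧ ∀ x' ∈ D, Jf x ≤ Jf x'


/-! The penalty `α‖v‖²_{S⁺} + ‖v‖²_{S⁻}` is the quadratic form of a bounded bilinear form `Q` on
`L²(Ω)` that dominates `min α 1 · ‖v‖²`. Minimizers for bounded data have bounded values of the
functional, so `x_k` and `F x_k` are bounded and, after passing twice to a subsequence, converge
weakly; weak closedness of `F` puts the weak limit `x̄` in `D(F)` with `F x_k ⇀ F x̄`. Both terms
of the functional are weakly lower semicontinuous, and comparing `x_k` with any competitor shows
that `x̄` is a minimizer. Comparing with `x̄` itself shows that the penalty converges, and for a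
coercive quadratic form weak convergence together with convergence of the form is strong
convergence. -/

namespace WeakConv

variable {H : Type*} [NormedAddCommGroup H] [InnerProductSpace ℝ H] {u v : ℕ → H} {x y : H}

lemma sub (hu : WeakConv u x) (hv : WeakConv v y) : WeakConv (u - v) (x - y) := fun z => by
  simpa only [Pi.sub_apply, inner_sub_left] using (hu z).sub (hv z)

lemma comp (hu : WeakConv u x) {φ : ℕ → ℕ} (hφ : Tendsto φ atTop atTop) :
    WeakConv (u ∘ φ) x := fun z => (hu z).comp hφ

lemma tendsto_apply [CompleteSpace H] (hu : WeakConv u x) (f : StrongDual ℝ H) :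
    Tendsto (fun k => f (u k)) atTop (𝓝 (f x)) := by
  simpa only [← InnerProductSpace.toDual_symm_apply (𝕜 := ℝ), real_inner_comm _ (u _),
    real_inner_comm _ x] using hu ((InnerProductSpace.toDual ℝ H).symm f)

end WeakConv

lemma Filter.Tendsto.weakConv {H : Type*} [NormedAddCommGroup H] [InnerProductSpace ℝ H]
    {u : ℕ → H} {x : H} (hu : Tendsto u atTop (𝓝 x)) : WeakConv u x := fun _ =>
  hu.inner tendsto_const_nhds

/-- Sequential Banach–Alaoglu in the separable space `K = closure (span (range u))`; testing
against `z` reduces to testing against its orthogonal projection onto `K`. -/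
theorem exists_weakConv_subseq {H : Type*} [NormedAddCommGroup H] [InnerProductSpace ℝ H]
    [CompleteSpace H] {u : ℕ → H} (hu : Bornology.IsBounded (Set.range u)) :
    ∃ φ : ℕ → ℕ, StrictMono φ ∧ ∃ x, WeakConv (u ∘ φ) x := by
  obtain ⟨C, hC⟩ := isBounded_iff_forall_norm_le.1 hu
  set K := (Submodule.span ℝ (Set.range u)).topologicalClosure
  have : CompleteSpace K :=
    (Submodule.span ℝ (Set.range u)).isClosed_topologicalClosure.completeSpace_coe
  have : TopologicalSpace.SeparableSpace K :=
    (Set.countable_range u).isSeparable.span.closure.separableSpace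
  have huK (k : ℕ) : u k ∈ K := Submodule.le_topologicalClosure _ (Submodule.subset_span ⟨k, rfl⟩)
  let v (k : ℕ) : WeakDual ℝ K := StrongDual.toWeakDual (innerSL ℝ (⟨u k, huK k⟩ : K))
  have hv (k : ℕ) : v k ∈ WeakDual.toStrongDual ⁻¹' Metric.closedBall 0 C := by
    have : ‖innerSL ℝ (⟨u k, huK k⟩ : K)‖ ≤ C := by simpa using hC _ ⟨k, rfl⟩
    exact mem_closedBall_zero_iff.2 this
  obtain ⟨f, -, φ, hφ, hf⟩ := WeakDual.isSeqCompact_closedBall ℝ K 0 C hv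
  refine ⟨φ, hφ, ((InnerProductSpace.toDual ℝ K).symm (WeakDual.toStrongDual f) : H), fun z => ?_⟩
  have := ((WeakDual.eval_continuous (K.orthogonalProjectionOnto z)).tendsto f).comp hf
  simp only [Function.comp_def, v] at this
  rw [← Submodule.inner_orthogonalProjectionOnto_eq_of_mem_left,
    InnerProductSpace.toDual_symm_apply]
  simpa using this

lemma ContinuousLinearMap.apply_sub_sub {X : Type*} [NormedAddCommGroup X] [NormedSpace ℝ X]
    (Q : X →L[ℝ] X →L[ℝ] ℝ) (v w : X) :
    Q (v - w) (v - w) = Q v v - Q v w - Q w v + Q w w := by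
  simp only [map_sub, sub_apply]
  ring

section QuadraticForm

variable {X : Type*} [NormedAddCommGroup X] [InnerProductSpace ℝ X] [CompleteSpace X]
  {Q : X →L[ℝ] X →L[ℝ] ℝ} {u : ℕ → X} {x : X}

lemma WeakConv.tendsto_apply_add_apply (hu : WeakConv u x) :
    Tendsto (fun k => Q (u k) x + Q x (u k)) atTop (𝓝 (Q x x + Q x x)) :=
  (hu.tendsto_apply (Q.flip x)).add (hu.tendsto_apply (Q x))

lemma WeakConv.eventually_lt_apply_self (hu : WeakConv u x) (hQ : ∀ v, 0 ≤ Q v v) {c : ℝ}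
    (hc : c < Q x x) : ∀ᶠ k in atTop, c < Q (u k) (u k) := by
  have hlim : Tendsto (fun k => Q (u k) x + Q x (u k) - Q x x) atTop (𝓝 (Q x x)) := by
    simpa using (hu.tendsto_apply_add_apply (Q := Q)).sub_const (Q x x)
  filter_upwards [hlim.eventually (lt_mem_nhds hc)] with k hk
  linarith [hQ (u k - x), Q.apply_sub_sub (u k) x]

lemma WeakConv.eventually_lt_norm_sq (hu : WeakConv u x) {c : ℝ} (hc : c < ‖x‖ ^ 2) :
    ∀ᶠ k in atTop, c < ‖u k‖ ^ 2 := by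
  simp only [← real_inner_self_eq_norm_sq] at hc ⊢
  exact hu.eventually_lt_apply_self (Q := innerSL ℝ) (fun _ => real_inner_self_nonneg) hc

lemma WeakConv.tendsto_of_tendsto_apply_self (hu : WeakConv u x) {m : ℝ} (hm : 0 < m)
    (hQ : ∀ v, m * ‖v‖ ^ 2 ≤ Q v v)
    (hlim : Tendsto (fun k => Q (u k) (u k)) atTop (𝓝 (Q x x))) : Tendsto u atTop (𝓝 x) := by
  have hdiff : Tendsto (fun k => Q (u k - x) (u k - x)) atTop (𝓝 0) := by
    have := (hlim.sub (hu.tendsto_apply_add_apply (Q := Q))).add_const (Q x x)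
    rw [show Q x x - (Q x x + Q x x) + Q x x = 0 by ring] at this
    refine this.congr fun k => ?_
    rw [Q.apply_sub_sub]
    ring
  have hsqrt := (hdiff.div_const m).sqrt
  rw [zero_div, Real.sqrt_zero] at hsqrt
  rw [tendsto_iff_norm_sub_tendsto_zero]
  refine squeeze_zero (fun k => norm_nonneg _) (fun k => Real.le_sqrt_of_sq_le ?_) hsqrt
  rw [le_div_iff₀ hm]
  linarith [hQ (u k - x)]

end QuadraticForm

-- `∀ a' < a, ∀ᶠ i in l, a' < f i` says `a ≤ liminf f` without the boundedness side conditions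
-- that `Filter.liminf` on `ℝ` would need.
lemma add_le_of_lower_bounds_of_tendsto {ι : Type*} {l : Filter ι} [l.NeBot] {f g h : ι → ℝ}
    {a b c : ℝ} (hf : ∀ a' < a, ∀ᶠ i in l, a' < f i) (hg : ∀ b' < b, ∀ᶠ i in l, b' < g i)
    (hh : Tendsto h l (𝓝 c)) (hfgh : ∀ i, f i + g i ≤ h i) : a + b ≤ c := by
  by_contra! hlt
  obtain ⟨ε, hε, hεabc⟩ : ∃ ε > 0, c + 3 * ε = a + b := ⟨(a + b - c) / 3, by linarith, by ring⟩
  obtain ⟨i, hfi, hgi, hhi⟩ := ((hf (a - ε) (by linarith)).and ((hg (b - ε) (by linarith)).and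
    (hh.eventually (gt_mem_nhds (show c < c + ε by linarith))))).exists
  linarith [hfgh i]

lemma tendsto_of_lower_bounds_of_tendsto_add {ι : Type*} {l : Filter ι} {f g h : ι → ℝ}
    {a b c : ℝ} (hf : ∀ a' < a, ∀ᶠ i in l, a' < f i) (hg : ∀ b' < b, ∀ᶠ i in l, b' < g i)
    (hh : Tendsto h l (𝓝 c)) (hfgh : ∀ i, f i + g i ≤ h i) (hc : c ≤ a + b) :
    Tendsto g l (𝓝 b) := by
  refine tendsto_order.2 ⟨hg, fun b' hb' => ?_⟩
  filter_upwards [hf (a - (b' - b) / 2) (by linarith),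
    hh.eventually (gt_mem_nhds (show c < c + (b' - b) / 2 by linarith))] with i hfi hhi
  linarith [hfgh i]

section Tikhonov

variable {X Y : Type*} [NormedAddCommGroup X] [NormedSpace ℝ X] [NormedAddCommGroup Y]
  {D : Set X} {F : X → Y} {Q : X →L[ℝ] X →L[ℝ] ℝ} {x₀ : X} {m : ℝ}
  {ys : ℕ → Y} {y : Y} {xs : ℕ → X}

def tikhonov (F : X → Y) (Q : X →L[ℝ] X →L[ℝ] ℝ) (x₀ : X) (z : Y) (x : X) : ℝ :=
  ‖F x - z‖ ^ 2 + Q (x - x₀) (x - x₀)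

lemma tendsto_tikhonov_of_tendsto_data (hys : Tendsto ys atTop (𝓝 y)) (x : X) :
    Tendsto (fun k => tikhonov F Q x₀ (ys k) x) atTop (𝓝 (tikhonov F Q x₀ y x)) :=
  ((tendsto_const_nhds.sub hys).norm.pow 2).add_const _

lemma isBounded_of_isMinimizer_tikhonov (hm : 0 < m) (hQ : ∀ v, m * ‖v‖ ^ 2 ≤ Q v v)
    (hD : D.Nonempty) (hys : Tendsto ys atTop (𝓝 y))
    (hxs : ∀ k, IsMinimizer (tikhonov F Q x₀ (ys k)) D (xs k)) :
    Bornology.IsBounded (Set.range xs) ∧ Bornology.IsBounded (Set.range (F ∘ xs)) := by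
  obtain ⟨x', hx'⟩ := hD
  obtain ⟨R, hR⟩ :=
    (tendsto_tikhonov_of_tendsto_data (F := F) (Q := Q) (x₀ := x₀) hys x').bddAbove_range
  have hJ (k : ℕ) : ‖F (xs k) - ys k‖ ^ 2 + Q (xs k - x₀) (xs k - x₀) ≤ R :=
    ((hxs k).2 x' hx').trans (hR ⟨k, rfl⟩)
  obtain ⟨Cy, hCy⟩ := isBounded_iff_forall_norm_le.1 (Metric.isBounded_range_of_tendsto ys hys)
  constructor
  · refine (Metric.isBounded_closedBall (x := x₀) (r := √(R / m))).subset ?_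
    rintro _ ⟨k, rfl⟩
    rw [Metric.mem_closedBall, dist_eq_norm]
    refine Real.le_sqrt_of_sq_le ((le_div_iff₀ hm).2 ?_)
    nlinarith [hJ k, hQ (xs k - x₀), sq_nonneg ‖F (xs k) - ys k‖]
  · refine isBounded_iff_forall_norm_le.2 ⟨√R + Cy, ?_⟩
    rintro _ ⟨k, rfl⟩
    have hres : ‖F (xs k) - ys k‖ ≤ √R :=
      Real.le_sqrt_of_sq_le (by nlinarith [hJ k, hQ (xs k - x₀), sq_nonneg ‖xs k - x₀‖])
    calc ‖F (xs k)‖ = ‖(F (xs k) - ys k) + ys k‖ := by rw [sub_add_cancel]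
      _ ≤ √R + Cy := (norm_add_le _ _).trans (add_le_add hres (hCy _ ⟨k, rfl⟩))

end Tikhonov

theorem isMinimizer_tikhonov_and_tendsto_of_weakConv
    {X Y : Type*} [NormedAddCommGroup X] [InnerProductSpace ℝ X] [CompleteSpace X]
    [NormedAddCommGroup Y] [InnerProductSpace ℝ Y] [CompleteSpace Y]
    {D : Set X} {F : X → Y} {Q : X →L[ℝ] X →L[ℝ] ℝ} {x₀ : X} {m : ℝ}
    {ys : ℕ → Y} {y : Y} {xs : ℕ → X}
    (hFweak : ∀ (u : ℕ → X) (x : X) (z : Y),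
      (∀ k, u k ∈ D) → WeakConv u x → WeakConv (fun k => F (u k)) z → x ∈ D ∧ F x = z)
    (hm : 0 < m) (hQ : ∀ v, m * ‖v‖ ^ 2 ≤ Q v v) (hys : Tendsto ys atTop (𝓝 y))
    (hxs : ∀ k, IsMinimizer (tikhonov F Q x₀ (ys k)) D (xs k)) {x : X} {z : Y}
    (hx : WeakConv xs x) (hFx : WeakConv (fun k => F (xs k)) z) :
    IsMinimizer (tikhonov F Q x₀ y) D x ∧ Tendsto xs atTop (𝓝 x) := by
  obtain ⟨hxD, rfl⟩ := hFweak xs x z (fun k => (hxs k).1) hx hFx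
  have hshift : WeakConv (fun k => xs k - x₀) (x - x₀) :=
    hx.sub (tendsto_const_nhds (x := x₀)).weakConv
  have hres : ∀ c < ‖F x - y‖ ^ 2, ∀ᶠ k in atTop, c < ‖F (xs k) - ys k‖ ^ 2 :=
    fun c hc => (hFx.sub hys.weakConv).eventually_lt_norm_sq hc
  have hpen : ∀ c < Q (x - x₀) (x - x₀), ∀ᶠ k in atTop, c < Q (xs k - x₀) (xs k - x₀) :=
    fun c hc => hshift.eventually_lt_apply_self
      (fun v => (by positivity : 0 ≤ m * ‖v‖ ^ 2).trans (hQ v)) hc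
  have hmin {x'} (hx' : x' ∈ D) (k : ℕ) :
      ‖F (xs k) - ys k‖ ^ 2 + Q (xs k - x₀) (xs k - x₀) ≤ tikhonov F Q x₀ (ys k) x' :=
    (hxs k).2 x' hx'
  refine ⟨⟨hxD, fun x' hx' => add_le_of_lower_bounds_of_tendsto hres hpen
    (tendsto_tikhonov_of_tendsto_data hys x') (hmin hx')⟩, ?_⟩
  have hpen_lim := tendsto_of_lower_bounds_of_tendsto_add hres hpen
    (tendsto_tikhonov_of_tendsto_data hys x) (hmin hxD) le_rfl
  simpa using (hshift.tendsto_of_tendsto_apply_self hm hQ hpen_lim).add_const x₀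

section WeightedForm

variable {β : Type*} [MeasurableSpace β]

def weightedForm (μ : Measure β) (S : Set β) (a : ℝ) : Lp ℝ 2 μ →L[ℝ] Lp ℝ 2 μ →L[ℝ] ℝ :=
  a • (innerSL ℝ).bilinearComp (LpToLpRestrictCLM β ℝ ℝ μ 2 S) (LpToLpRestrictCLM β ℝ ℝ μ 2 S)
    + (innerSL ℝ).bilinearComp (LpToLpRestrictCLM β ℝ ℝ μ 2 Sᶜ) (LpToLpRestrictCLM β ℝ ℝ μ 2 Sᶜ)

variable {μ : Measure β}

lemma norm_LpToLpRestrictCLM_sq (T : Set β) (f : Lp ℝ 2 μ) :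
    ‖LpToLpRestrictCLM β ℝ ℝ μ 2 T f‖ ^ 2 = ∫ a in T, f a ^ 2 ∂μ := by
  rw [← real_inner_self_eq_norm_sq, L2.inner_def]
  refine integral_congr_ae ?_
  filter_upwards [LpToLpRestrictCLM_coeFn ℝ T f] with a ha
  simp [ha, sq]

lemma integral_sq_eq_norm_sq (f : Lp ℝ 2 μ) : ∫ a, f a ^ 2 ∂μ = ‖f‖ ^ 2 := by
  rw [← real_inner_self_eq_norm_sq, L2.inner_def]
  simp

lemma weightedForm_apply_self (S : Set β) (a : ℝ) (f : Lp ℝ 2 μ) :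
    weightedForm μ S a f f = a * ∫ t in S, f t ^ 2 ∂μ + ∫ t in Sᶜ, f t ^ 2 ∂μ := by
  simp [weightedForm, norm_LpToLpRestrictCLM_sq]

lemma min_mul_norm_sq_le_weightedForm {S : Set β} (hS : MeasurableSet S) (a : ℝ)
    (f : Lp ℝ 2 μ) : min a 1 * ‖f‖ ^ 2 ≤ weightedForm μ S a f f := by
  rw [weightedForm_apply_self, ← integral_sq_eq_norm_sq,
    ← integral_add_compl hS (Lp.memLp f).integrable_sq]
  have hS0 : 0 ≤ ∫ t in S, f t ^ 2 ∂μ := integral_nonneg fun _ => sq_nonneg _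
  have hSc0 : 0 ≤ ∫ t in Sᶜ, f t ^ 2 ∂μ := integral_nonneg fun _ => sq_nonneg _
  nlinarith [min_le_left a 1, min_le_right a 1]

lemma MeasureTheory.Measure.restrict_restrict_sdiff (μ : Measure β) {Ω S : Set β} (hS : MeasurableSet S) :
    (μ.restrict Ω).restrict (Ω \ S) = (μ.restrict Ω).restrict Sᶜ := by
  rw [Measure.restrict_restrict_of_subset Set.sdiff_subset, Measure.restrict_restrict hS.compl,
    Set.sdiff_eq_compl_inter]

end WeightedForm

theorem measurement_stability_general
    {n : ℕ} (Ω : Set (Fin n → ℝ))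
    {Y : Type*} [NormedAddCommGroup Y] [InnerProductSpace ℝ Y] [CompleteSpace Y]
    (D : Set (Lp ℝ 2 (volume.restrict Ω))) (hD : D.Nonempty)
    (F : Lp ℝ 2 (volume.restrict Ω) → Y)
    (hFweak : ∀ (u : ℕ → Lp ℝ 2 (volume.restrict Ω))
      (x : Lp ℝ 2 (volume.restrict Ω)) (z : Y),
      (∀ k, u k ∈ D) → WeakConv u x → WeakConv (fun k => F (u k)) z →
        x ∈ D ∧ F x = z)
    (xstar : Lp ℝ 2 (volume.restrict Ω))
    (α : ℝ) (hα : 0 < α)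
    (S : Set (Fin n → ℝ)) (hSmeas : MeasurableSet S)
    (yδ : Y) (ys : ℕ → Y) (hys : Tendsto ys atTop (𝓝 yδ))
    (xs : ℕ → Lp ℝ 2 (volume.restrict Ω))
    (hxs : ∀ k, IsMinimizer (J Ω F xstar α S (ys k)) D (xs k)) :
    (∃ φ : ℕ → ℕ, StrictMono φ ∧
      ∃ xbar : Lp ℝ 2 (volume.restrict Ω), Tendsto (xs ∘ φ) atTop (𝓝 xbar)) ∧
    (∀ (φ : ℕ → ℕ), StrictMono φ →
      ∀ xbar : Lp ℝ 2 (volume.restrict Ω), Tendsto (xs ∘ φ) atTop (𝓝 xbar) →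
        IsMinimizer (J Ω F xstar α S yδ) D xbar) := by
  have hJ : J Ω F xstar α S = tikhonov F (weightedForm _ S α) xstar := by
    ext z x
    rw [J, tikhonov, weightedForm_apply_self, sqInt, sqInt,
      Measure.restrict_restrict_sdiff _ hSmeas]
  rw [hJ] at hxs ⊢
  have hm : 0 < min α 1 := lt_min hα one_pos
  have hcoer := min_mul_norm_sq_le_weightedForm (μ := volume.restrict Ω) hSmeas α
  have hsub {φ : ℕ → ℕ} (hφ : StrictMono φ) {x z} (hx : WeakConv (xs ∘ φ) x)
      (hz : WeakConv (fun k => F (xs (φ k))) z) :=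
    isMinimizer_tikhonov_and_tendsto_of_weakConv hFweak hm hcoer
      (hys.comp hφ.tendsto_atTop) (fun k => hxs (φ k)) hx hz
  obtain ⟨hbdd, hFbdd⟩ := isBounded_of_isMinimizer_tikhonov hm hcoer hD hys hxs
  have hFsub (φ : ℕ → ℕ) : Bornology.IsBounded (Set.range (F ∘ xs ∘ φ)) :=
    hFbdd.subset (Set.range_comp_subset_range φ (F ∘ xs))
  refine ⟨?_, fun φ hφ x hx => ?_⟩
  · obtain ⟨φ₁, hφ₁, x, hx⟩ := exists_weakConv_subseq hbdd
    obtain ⟨φ₂, hφ₂, z, hz⟩ := exists_weakConv_subseq (hFsub φ₁)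
    exact ⟨φ₁ ∘ φ₂, hφ₁.comp hφ₂, x, (hsub (hφ₁.comp hφ₂) (hx.comp hφ₂.tendsto_atTop) hz).2⟩
  · obtain ⟨φ₂, hφ₂, z, hz⟩ := exists_weakConv_subseq (hFsub φ)
    exact (hsub (hφ.comp hφ₂) (hx.comp hφ₂.tendsto_atTop).weakConv hz).1

/-- **Measurement stability** (Theorem A.1): if `y_k → y^δ` and `x_k` minimizes
`J_{α,S,y_k}` over `D(F)`, then `(x_k)` has a strongly convergent subsequence in
`L²(Ω)`, and every strong limit of a convergent subsequence of `(x_k)` is a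
minimizer of `J_{α,S,y^δ}` over `D(F)`. -/
theorem measurement_stability
    {n : ℕ} (Ω : Set (Fin n → ℝ)) (hΩmeas : MeasurableSet Ω)
    (hΩbdd : Bornology.IsBounded Ω)
    {Y : Type*} [NormedAddCommGroup Y] [InnerProductSpace ℝ Y] [CompleteSpace Y]
    (D : Set (Lp ℝ 2 (volume.restrict Ω))) (hD : D.Nonempty)
    (F : Lp ℝ 2 (volume.restrict Ω) → Y)
    (hFcont : ContinuousOn F D)
    (hFweak : ∀ (u : ℕ → Lp ℝ 2 (volume.restrict Ω))
      (x : Lp ℝ 2 (volume.restrict Ω)) (z : Y),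
      (∀ k, u k ∈ D) → WeakConv u x → WeakConv (fun k => F (u k)) z →
        x ∈ D ∧ F x = z)
    (xstar : Lp ℝ 2 (volume.restrict Ω))
    (α : ℝ) (hα : 0 < α)
    (S : Set (Fin n → ℝ)) (hSmeas : MeasurableSet S) (hSΩ : S ⊆ Ω)
    (yδ : Y) (ys : ℕ → Y) (hys : Tendsto ys atTop (𝓝 yδ))
    (xs : ℕ → Lp ℝ 2 (volume.restrict Ω))
    (hxs : ∀ k, IsMinimizer (J Ω F xstar α S (ys k)) D (xs k)) :
    (∃ φ : ℕ → ℕ, StrictMono φ ∧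
      ∃ xbar : Lp ℝ 2 (volume.restrict Ω), Tendsto (xs ∘ φ) atTop (𝓝 xbar)) ∧
    (∀ (φ : ℕ → ℕ), StrictMono φ →
      ∀ xbar : Lp ℝ 2 (volume.restrict Ω), Tendsto (xs ∘ φ) atTop (𝓝 xbar) →
        IsMinimizer (J Ω F xstar α S yδ) D xbar) :=
  measurement_stability_general Ω D hD F hFweak xstar α hα S hSmeas yδ ys hys xs hxs
end
end

section
/- (Convergence.) Let ‖y − y^{δ}‖_Y ≤ δ for noisy data y^{δ} ∈ Y, and let α : (0,∞) → (0,∞) satisfy α(δ) → 0 and δ²/α(δ) → 0 as δ → 0. Assume an x*-S-minimum-norm solution exists. Let δ_k → 0, let y_k ∈ Y with ‖y − y_k‖_Y ≤ δ_k, set α_k := α(δ_k), and let x_k ∈ D(F) be a minimizer of J_{α_k,S,y_k} over D(F). Then (x_k) has a subsequence converging strongly in L²(Ω), and every strong limit of a convergent subsequence of (x_k) is an x*-S-minimum-norm solution. -/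
open MeasureTheory Filter
open scoped RealInnerProductSpace ENNReal Topology

noncomputable section

/-- `x = 0` almost everywhere on `Ω ∖ S`. -/
def ZeroOff {n : ℕ} (Ω S : Set (Fin n → ℝ))
    (x : Lp ℝ 2 (volume.restrict Ω)) : Prop :=
  ∀ᵐ t ∂((volume.restrict Ω).restrict (Ω \ S)), x t = 0

/-- `xdag` is an `x*`-`S`-minimum-norm solution of `F(x) = y`: it belongs to
`D(F)`, solves `F(xdag) = y`, vanishes a.e. on `Ω ∖ S`, and minimizes
`‖x − x*‖_{L²}` among all such solutions. -/
def IsMNS {n : ℕ} (Ω : Set (Fin n → ℝ)) {Y : Type*} [NormedAddCommGroup Y]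
    [InnerProductSpace ℝ Y]
    (D : Set (Lp ℝ 2 (volume.restrict Ω))) (F : Lp ℝ 2 (volume.restrict Ω) → Y)
    (xstar : Lp ℝ 2 (volume.restrict Ω)) (S : Set (Fin n → ℝ)) (y : Y)
    (xdag : Lp ℝ 2 (volume.restrict Ω)) : Prop :=
  xdag ∈ D ∧ F xdag = y ∧ ZeroOff Ω S xdag ∧
    ∀ x ∈ D, F x = y → ZeroOff Ω S x → ‖xdag - xstar‖ ≤ ‖x - xstar‖

/-!
Let `ρ = ‖x† - x*‖` for a minimum-norm solution `x†`. Comparing `J(x_k) ≤ J(x†)` bounds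
`‖F x_k - y_k‖²` and the `S⁻`-part of `x_k - x*` by `δ_k² + α_k ρ² → 0`, and `‖x_k - x*‖²` by
`δ_k²/α_k + ρ² + o(1) → ρ²`. So `(x_k)` is bounded and, `L²(Ω)` being separable, has weakly
convergent subsequences. At a weak cluster point `w`, weak closedness of `F` gives `w ∈ D(F)`,
`F w = y`; the `S⁻`-part vanishes because restriction to `Ω ∖ S` is continuous linear; and weak
lower semicontinuity of the norm gives `‖w - x*‖ ≤ ρ`. Hence `w` is a minimum-norm solution with
`‖w - x*‖ = ρ = lim ‖x_k - x*‖`, and weak convergence with convergence of norms is strong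
convergence.
-/

namespace WeakConv

variable {H : Type*} [NormedAddCommGroup H] [InnerProductSpace ℝ H] {u : ℕ → H} {x : H}

theorem of_tendsto (h : Tendsto u atTop (𝓝 x)) : WeakConv u x :=
  fun _ => h.inner tendsto_const_nhds

theorem sub_const (h : WeakConv u x) (c : H) : WeakConv (fun k => u k - c) (x - c) :=
  fun z => by simpa only [inner_sub_left] using (h z).sub_const ⟪c, z⟫

theorem unique (h : WeakConv u x) {x' : H} (h' : WeakConv u x') : x = x' :=
  ext_inner_right ℝ fun z => tendsto_nhds_unique (h z) (h' z)

theorem map [CompleteSpace H] {K : Type*} [NormedAddCommGroup K] [InnerProductSpace ℝ K]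
    [CompleteSpace K] (h : WeakConv u x) (T : H →L[ℝ] K) :
    WeakConv (fun k => T (u k)) (T x) :=
  fun z => by simpa only [ContinuousLinearMap.adjoint_inner_right] using h (T.adjoint z)

theorem norm_le_of_tendsto (h : WeakConv u x) {b : ℕ → ℝ} {r : ℝ} (hb : ∀ k, ‖u k‖ ≤ b k)
    (hbr : Tendsto b atTop (𝓝 r)) : ‖x‖ ≤ r := by
  have hr : 0 ≤ r := ge_of_tendsto' hbr fun k => (norm_nonneg _).trans (hb k)
  have hsq : ‖x‖ ^ 2 ≤ r * ‖x‖ := by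
    rw [← real_inner_self_eq_norm_sq]
    refine le_of_tendsto_of_tendsto' (h x) (hbr.mul_const ‖x‖) fun k => ?_
    exact (real_inner_le_norm _ _).trans (mul_le_mul_of_nonneg_right (hb k) (norm_nonneg x))
  nlinarith [norm_nonneg x]

/-- The Radon–Riesz property of Hilbert spaces. -/
theorem tendsto_of_norm_le (h : WeakConv u x) {b : ℕ → ℝ} (hb : ∀ k, ‖u k‖ ≤ b k)
    (hbx : Tendsto b atTop (𝓝 ‖x‖)) : Tendsto u atTop (𝓝 x) := by
  have hsq : Tendsto (fun k => ‖u k - x‖ ^ 2) atTop (𝓝 0) := by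
    refine squeeze_zero (fun _ => sq_nonneg _) (g := fun k => b k ^ 2 - 2 * ⟪u k, x⟫ + ‖x‖ ^ 2)
      (fun k => ?_) ?_
    · rw [norm_sub_sq_real]
      gcongr
      exact hb k
    · convert ((hbx.pow 2).sub ((h x).const_mul 2)).add_const (‖x‖ ^ 2) using 2
      rw [real_inner_self_eq_norm_sq]
      ring
  rw [tendsto_iff_norm_sub_tendsto_zero]
  simpa using hsq.sqrt

/-- Sequential Banach–Alaoglu, transported to `H` by the Riesz representation. -/
theorem exists_subseq_of_norm_le [CompleteSpace H] [TopologicalSpace.SeparableSpace H] {M : ℝ}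
    (hM : ∀ k, ‖u k‖ ≤ M) : ∃ φ : ℕ → ℕ, StrictMono φ ∧ ∃ x : H, WeakConv (u ∘ φ) x := by
  have hball : ∀ k, StrongDual.toWeakDual (InnerProductSpace.toDual ℝ H (u k)) ∈
      WeakDual.toStrongDual ⁻¹' Metric.closedBall (0 : StrongDual ℝ H) M := fun k => by
    simpa using hM k
  obtain ⟨f, -, φ, hφ, hf⟩ := WeakDual.isSeqCompact_closedBall ℝ H 0 M hball
  refine ⟨φ, hφ, (InnerProductSpace.toDual ℝ H).symm (WeakDual.toStrongDual f), fun z => ?_⟩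
  rw [InnerProductSpace.toDual_symm_apply]
  exact ((WeakDual.eval_continuous z).tendsto f).comp hf

end WeakConv

section L2Restrict

variable {X : Type*} [MeasurableSpace X] {μ : Measure X}

theorem L2.norm_sq_eq_integral_sq (v : Lp ℝ 2 μ) : ‖v‖ ^ 2 = ∫ t, v t ^ 2 ∂μ := by
  rw [← real_inner_self_eq_norm_sq, L2.inner_def]
  simp [sq]

theorem L2.setIntegral_sq_eq_norm_restrict_sq (T : Set X) (v : Lp ℝ 2 μ) :
    ∫ t in T, v t ^ 2 ∂μ = ‖LpToLpRestrictCLM X ℝ ℝ μ 2 T v‖ ^ 2 := by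
  rw [L2.norm_sq_eq_integral_sq]
  refine integral_congr_ae ?_
  filter_upwards [LpToLpRestrictCLM_coeFn ℝ T v] with t ht
  rw [ht]

theorem LpToLpRestrictCLM_eq_zero_iff {p : ℝ≥0∞} [Fact (1 ≤ p)] (T : Set X) (v : Lp ℝ p μ) :
    LpToLpRestrictCLM X ℝ ℝ μ p T v = 0 ↔ v =ᵐ[μ.restrict T] 0 := by
  rw [Lp.eq_zero_iff_ae_eq_zero]
  exact ⟨(LpToLpRestrictCLM_coeFn ℝ T v).symm.trans, (LpToLpRestrictCLM_coeFn ℝ T v).trans⟩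

end L2Restrict

section Tikhonov

variable {n : ℕ} {Ω S : Set (Fin n → ℝ)}

theorem sqInt_eq_norm_sq (T : Set (Fin n → ℝ)) (v : Lp ℝ 2 (volume.restrict Ω)) :
    sqInt Ω T v = ‖LpToLpRestrictCLM _ ℝ ℝ _ 2 T v‖ ^ 2 :=
  L2.setIntegral_sq_eq_norm_restrict_sq T v

theorem zeroOff_iff (v : Lp ℝ 2 (volume.restrict Ω)) :
    ZeroOff Ω S v ↔ LpToLpRestrictCLM _ ℝ ℝ _ 2 (Ω \ S) v = 0 :=
  (LpToLpRestrictCLM_eq_zero_iff _ v).symm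

theorem ZeroOff.sub {v w : Lp ℝ 2 (volume.restrict Ω)} (hv : ZeroOff Ω S v)
    (hw : ZeroOff Ω S w) : ZeroOff Ω S (v - w) := by
  rw [zeroOff_iff] at *
  rw [map_sub, hv, hw, sub_zero]

theorem norm_sq_eq_sqInt_add_sqInt (hΩ : MeasurableSet Ω) (hS : MeasurableSet S)
    (v : Lp ℝ 2 (volume.restrict Ω)) : ‖v‖ ^ 2 = sqInt Ω S v + sqInt Ω (Ω \ S) v := by
  have hcompl : (volume.restrict Ω).restrict (Ω \ S) = (volume.restrict Ω).restrict Sᶜ := by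
    rw [Measure.restrict_restrict' hΩ, Measure.restrict_restrict' hΩ, Set.sdiff_eq,
      Set.inter_right_comm, Set.inter_self, Set.inter_comm]
  rw [L2.norm_sq_eq_integral_sq, sqInt, sqInt, hcompl,
    integral_add_compl hS (Lp.memLp v).integrable_sq]

variable {Y : Type*} [NormedAddCommGroup Y] [InnerProductSpace ℝ Y]
  {D : Set (Lp ℝ 2 (volume.restrict Ω))} {F : Lp ℝ 2 (volume.restrict Ω) → Y}
  {xstar xdag : Lp ℝ 2 (volume.restrict Ω)} {y : Y}

theorem J_eq_of_isMNS (hΩ : MeasurableSet Ω) (hS : MeasurableSet S) (hxstar : ZeroOff Ω S xstar)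
    (hdag : IsMNS Ω D F xstar S y xdag) (α : ℝ) (z : Y) :
    J Ω F xstar α S z xdag = ‖y - z‖ ^ 2 + α * ‖xdag - xstar‖ ^ 2 := by
  have hoff : sqInt Ω (Ω \ S) (xdag - xstar) = 0 := by
    rw [sqInt_eq_norm_sq, (zeroOff_iff _).mp (hdag.2.2.1.sub hxstar), norm_zero, sq, mul_zero]
  rw [J, norm_sq_eq_sqInt_add_sqInt hΩ hS, hoff, hdag.2.1]
  ring

/-- All three bounds come from `J x ≤ J xdag ≤ δ ^ 2 + α * ‖xdag - xstar‖ ^ 2`. -/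
theorem IsMinimizer.le_of_isMNS (hΩ : MeasurableSet Ω) (hS : MeasurableSet S)
    (hxstar : ZeroOff Ω S xstar) (hdag : IsMNS Ω D F xstar S y xdag) {α δ : ℝ} (hα : 0 < α)
    {z : Y} (hz : ‖y - z‖ ≤ δ) {x : Lp ℝ 2 (volume.restrict Ω)}
    (hx : IsMinimizer (J Ω F xstar α S z) D x) :
    ‖F x - z‖ ^ 2 ≤ δ ^ 2 + α * ‖xdag - xstar‖ ^ 2 ∧
      sqInt Ω (Ω \ S) (x - xstar) ≤ δ ^ 2 + α * ‖xdag - xstar‖ ^ 2 ∧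
      ‖x - xstar‖ ^ 2 ≤ δ ^ 2 / α + ‖xdag - xstar‖ ^ 2 + (δ ^ 2 + α * ‖xdag - xstar‖ ^ 2) := by
  set c := δ ^ 2 + α * ‖xdag - xstar‖ ^ 2
  have hJ : J Ω F xstar α S z x ≤ c := by
    have hzδ : ‖y - z‖ ^ 2 ≤ δ ^ 2 := pow_le_pow_left₀ (norm_nonneg _) hz 2
    linarith [hx.2 xdag hdag.1, J_eq_of_isMNS hΩ hS hxstar hdag α z]
  have hon : 0 ≤ α * sqInt Ω S (x - xstar) :=
    mul_nonneg hα.le (integral_nonneg fun _ => sq_nonneg _)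
  have hoff : 0 ≤ sqInt Ω (Ω \ S) (x - xstar) := integral_nonneg fun _ => sq_nonneg _
  have hres : 0 ≤ ‖F x - z‖ ^ 2 := sq_nonneg _
  rw [J] at hJ
  have hαon : sqInt Ω S (x - xstar) ≤ δ ^ 2 / α + ‖xdag - xstar‖ ^ 2 := by
    rw [← mul_div_cancel_left₀ (‖xdag - xstar‖ ^ 2) hα.ne', ← add_div, le_div_iff₀ hα]
    linarith
  refine ⟨by linarith, by linarith, ?_⟩
  rw [norm_sq_eq_sqInt_add_sqInt hΩ hS]
  linarith

theorem IsMinimizer.tendsto_of_isMNS (hΩ : MeasurableSet Ω) (hS : MeasurableSet S)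
    (hxstar : ZeroOff Ω S xstar) (hdag : IsMNS Ω D F xstar S y xdag) {αs δs : ℕ → ℝ}
    (hα : ∀ k, 0 < αs k) (hα0 : Tendsto αs atTop (𝓝 0)) (hδ0 : Tendsto δs atTop (𝓝 0))
    (hδα : Tendsto (fun k => δs k ^ 2 / αs k) atTop (𝓝 0)) {ys : ℕ → Y}
    (hys : ∀ k, ‖y - ys k‖ ≤ δs k) {xs : ℕ → Lp ℝ 2 (volume.restrict Ω)}
    (hxs : ∀ k, IsMinimizer (J Ω F xstar (αs k) S (ys k)) D (xs k)) :
    Tendsto (F ∘ xs) atTop (𝓝 y) ∧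
      Tendsto (fun k => sqInt Ω (Ω \ S) (xs k - xstar)) atTop (𝓝 0) ∧
      ∃ b : ℕ → ℝ, (∀ k, ‖xs k - xstar‖ ≤ b k) ∧ Tendsto b atTop (𝓝 ‖xdag - xstar‖) := by
  set ρ := ‖xdag - xstar‖
  set c : ℕ → ℝ := fun k => δs k ^ 2 + αs k * ρ ^ 2
  have hc : Tendsto c atTop (𝓝 0) := by simpa using (hδ0.pow 2).add (hα0.mul_const (ρ ^ 2))
  have hbd := fun k => (hxs k).le_of_isMNS hΩ hS hxstar hdag (hα k) (hys k)
  refine ⟨?_,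
    squeeze_zero (fun _ => integral_nonneg fun _ => sq_nonneg _) (fun k => (hbd k).2.1) hc,
    fun k => √(δs k ^ 2 / αs k + ρ ^ 2 + c k), fun k => Real.le_sqrt_of_sq_le (hbd k).2.2, ?_⟩
  · rw [tendsto_iff_norm_sub_tendsto_zero]
    refine squeeze_zero (fun _ => norm_nonneg _) (fun k => ?_) (by simpa using hc.sqrt.add hδ0)
    calc ‖F (xs k) - y‖ ≤ ‖F (xs k) - ys k‖ + ‖ys k - y‖ := norm_sub_le_norm_sub_add_norm_sub ..
      _ ≤ √(c k) + δs k :=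
        add_le_add (Real.le_sqrt_of_sq_le (hbd k).1) ((norm_sub_rev _ _).trans_le (hys k))
  · have h := ((hδα.add_const (ρ ^ 2)).add hc).sqrt
    rwa [zero_add, add_zero, Real.sqrt_sq (norm_nonneg _)] at h

theorem isMNS_of_weakConv (hxstar : ZeroOff Ω S xstar)
    (hFweak : ∀ (u : ℕ → Lp ℝ 2 (volume.restrict Ω)) (x : Lp ℝ 2 (volume.restrict Ω)) (z : Y),
      (∀ k, u k ∈ D) → WeakConv u x → WeakConv (fun k => F (u k)) z → x ∈ D ∧ F x = z)
    (hdag : IsMNS Ω D F xstar S y xdag) {u : ℕ → Lp ℝ 2 (volume.restrict Ω)}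
    {w : Lp ℝ 2 (volume.restrict Ω)} (hu : ∀ k, u k ∈ D) (hw : WeakConv u w)
    (hF : Tendsto (F ∘ u) atTop (𝓝 y))
    (hoff : Tendsto (fun k => sqInt Ω (Ω \ S) (u k - xstar)) atTop (𝓝 0)) {b : ℕ → ℝ}
    (hb : ∀ k, ‖u k - xstar‖ ≤ b k) (hbl : Tendsto b atTop (𝓝 ‖xdag - xstar‖)) :
    IsMNS Ω D F xstar S y w ∧ ‖w - xstar‖ = ‖xdag - xstar‖ := by
  obtain ⟨hwD, hwF⟩ := hFweak u w y hu hw (.of_tendsto hF)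
  have hwZ : ZeroOff Ω S w := by
    set P := LpToLpRestrictCLM _ ℝ ℝ (volume.restrict Ω) 2 (Ω \ S)
    have hP : Tendsto (fun k => P (u k - xstar)) atTop (𝓝 0) := by
      rw [tendsto_zero_iff_norm_tendsto_zero]
      simpa [sqInt_eq_norm_sq, Real.sqrt_sq (norm_nonneg _)] using hoff.sqrt
    have hPw : P (w - xstar) = 0 := ((hw.sub_const xstar).map P).unique (.of_tendsto hP)
    rw [zeroOff_iff, ← sub_add_cancel w xstar, map_add, hPw, (zeroOff_iff _).mp hxstar, add_zero]
  have hle : ‖w - xstar‖ ≤ ‖xdag - xstar‖ := (hw.sub_const xstar).norm_le_of_tendsto hb hbl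
  exact ⟨⟨hwD, hwF, hwZ, fun x hxD hxF hxZ => hle.trans (hdag.2.2.2 x hxD hxF hxZ)⟩,
    le_antisymm hle (hdag.2.2.2 w hwD hwF hwZ)⟩

end Tikhonov

theorem convergence_to_minimum_norm_solution_general
    {n : ℕ} (Ω : Set (Fin n → ℝ)) (hΩmeas : MeasurableSet Ω)
    {Y : Type*} [NormedAddCommGroup Y] [InnerProductSpace ℝ Y]
    (D : Set (Lp ℝ 2 (volume.restrict Ω)))
    (F : Lp ℝ 2 (volume.restrict Ω) → Y)
    (hFweak : ∀ (u : ℕ → Lp ℝ 2 (volume.restrict Ω))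
      (x : Lp ℝ 2 (volume.restrict Ω)) (z : Y),
      (∀ k, u k ∈ D) → WeakConv u x → WeakConv (fun k => F (u k)) z →
        x ∈ D ∧ F x = z)
    (xstar : Lp ℝ 2 (volume.restrict Ω))
    (S : Set (Fin n → ℝ)) (hSmeas : MeasurableSet S)
    (hxstar : ZeroOff Ω S xstar)
    (y : Y)
    (α : ℝ → ℝ) (hαpos : ∀ δ > (0 : ℝ), 0 < α δ)
    (hα0 : Tendsto α (𝓝[>] (0 : ℝ)) (𝓝 0))
    (hδ2α : Tendsto (fun δ => δ ^ 2 / α δ) (𝓝[>] (0 : ℝ)) (𝓝 0))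
    (hexists : ∃ xdag, IsMNS Ω D F xstar S y xdag)
    (δs : ℕ → ℝ) (hδpos : ∀ k, 0 < δs k) (hδ0 : Tendsto δs atTop (𝓝 0))
    (ys : ℕ → Y) (hys : ∀ k, ‖y - ys k‖ ≤ δs k)
    (xs : ℕ → Lp ℝ 2 (volume.restrict Ω))
    (hxs : ∀ k, IsMinimizer (J Ω F xstar (α (δs k)) S (ys k)) D (xs k)) :
    (∃ φ : ℕ → ℕ, StrictMono φ ∧
      ∃ xbar : Lp ℝ 2 (volume.restrict Ω), Tendsto (xs ∘ φ) atTop (𝓝 xbar)) ∧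
    (∀ (φ : ℕ → ℕ), StrictMono φ →
      ∀ xbar : Lp ℝ 2 (volume.restrict Ω), Tendsto (xs ∘ φ) atTop (𝓝 xbar) →
        IsMNS Ω D F xstar S y xbar) := by
  obtain ⟨xdag, hdag⟩ := hexists
  have hδ : Tendsto δs atTop (𝓝[>] 0) := tendsto_nhdsWithin_iff.2 ⟨hδ0, .of_forall hδpos⟩
  obtain ⟨hF, hoff, b, hb, hbl⟩ := IsMinimizer.tendsto_of_isMNS hΩmeas hSmeas hxstar hdag
    (fun k => hαpos _ (hδpos k)) (hα0.comp hδ) hδ0 (hδ2α.comp hδ) hys hxs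
  have hcluster : ∀ φ : ℕ → ℕ, StrictMono φ → ∀ w, WeakConv (xs ∘ φ) w →
      IsMNS Ω D F xstar S y w ∧ ‖w - xstar‖ = ‖xdag - xstar‖ := fun φ hφ w hw =>
    isMNS_of_weakConv hxstar hFweak hdag (fun k => (hxs (φ k)).1) hw
      (hF.comp hφ.tendsto_atTop) (hoff.comp hφ.tendsto_atTop) (fun k => hb (φ k))
      (hbl.comp hφ.tendsto_atTop)
  refine ⟨?_, fun φ hφ xbar hlim => (hcluster φ hφ xbar (.of_tendsto hlim)).1⟩
  -- lets `Lp.SecondCountableTopology` fire, so that `L²(Ω)` is separable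
  have : Fact ((2 : ℝ≥0∞) ≠ ∞) := ⟨ENNReal.ofNat_ne_top⟩
  obtain ⟨M, hM⟩ := hbl.bddAbove_range
  have hbdd : ∀ k, ‖xs k‖ ≤ M + ‖xstar‖ := fun k => by
    linarith [norm_sub_norm_le (xs k) xstar, hb k, hM ⟨k, rfl⟩]
  obtain ⟨φ, hφ, w, hw⟩ := WeakConv.exists_subseq_of_norm_le hbdd
  have hnorm : Tendsto (b ∘ φ) atTop (𝓝 ‖w - xstar‖) := by
    rw [(hcluster φ hφ w hw).2]
    exact hbl.comp hφ.tendsto_atTop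
  refine ⟨φ, hφ, w, ?_⟩
  have hstrong := (hw.sub_const xstar).tendsto_of_norm_le (fun k => hb (φ k)) hnorm
  simpa [Function.comp_def] using hstrong.add_const xstar

/-- **Convergence** (Theorem A.3): with `α(δ) → 0` and `δ²/α(δ) → 0` as
`δ → 0⁺`, if an `x*`-`S`-minimum-norm solution exists, `δ_k → 0`,
`‖y − y_k‖ ≤ δ_k`, and `x_k` minimizes `J_{α(δ_k),S,y_k}` over `D(F)`, then
`(x_k)` has a strongly convergent subsequence in `L²(Ω)`, and every strong
limit of a convergent subsequence of `(x_k)` is an `x*`-`S`-minimum-norm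
solution. -/
theorem convergence_to_minimum_norm_solution
    {n : ℕ} (Ω : Set (Fin n → ℝ)) (hΩmeas : MeasurableSet Ω)
    (hΩbdd : Bornology.IsBounded Ω)
    {Y : Type*} [NormedAddCommGroup Y] [InnerProductSpace ℝ Y] [CompleteSpace Y]
    (D : Set (Lp ℝ 2 (volume.restrict Ω))) (hD : D.Nonempty)
    (F : Lp ℝ 2 (volume.restrict Ω) → Y)
    (hFcont : ContinuousOn F D)
    (hFweak : ∀ (u : ℕ → Lp ℝ 2 (volume.restrict Ω))
      (x : Lp ℝ 2 (volume.restrict Ω)) (z : Y),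
      (∀ k, u k ∈ D) → WeakConv u x → WeakConv (fun k => F (u k)) z →
        x ∈ D ∧ F x = z)
    (xstar : Lp ℝ 2 (volume.restrict Ω))
    (S : Set (Fin n → ℝ)) (hSmeas : MeasurableSet S) (hSΩ : S ⊆ Ω)
    (hxstar : ZeroOff Ω S xstar)
    (y : Y)
    (α : ℝ → ℝ) (hαpos : ∀ δ > (0 : ℝ), 0 < α δ)
    (hα0 : Tendsto α (𝓝[>] (0 : ℝ)) (𝓝 0))
    (hδ2α : Tendsto (fun δ => δ ^ 2 / α δ) (𝓝[>] (0 : ℝ)) (𝓝 0))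
    (hexists : ∃ xdag, IsMNS Ω D F xstar S y xdag)
    (δs : ℕ → ℝ) (hδpos : ∀ k, 0 < δs k) (hδ0 : Tendsto δs atTop (𝓝 0))
    (ys : ℕ → Y) (hys : ∀ k, ‖y - ys k‖ ≤ δs k)
    (xs : ℕ → Lp ℝ 2 (volume.restrict Ω))
    (hxs : ∀ k, IsMinimizer (J Ω F xstar (α (δs k)) S (ys k)) D (xs k)) :
    (∃ φ : ℕ → ℕ, StrictMono φ ∧
      ∃ xbar : Lp ℝ 2 (volume.restrict Ω), Tendsto (xs ∘ φ) atTop (𝓝 xbar)) ∧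
    (∀ (φ : ℕ → ℕ), StrictMono φ →
      ∀ xbar : Lp ℝ 2 (volume.restrict Ω), Tendsto (xs ∘ φ) atTop (𝓝 xbar) →
        IsMNS Ω D F xstar S y xbar) :=
  convergence_to_minimum_norm_solution_general Ω hΩmeas D F hFweak xstar S hSmeas hxstar y α hαpos
    hα0 hδ2α hexists δs hδpos hδ0 ys hys xs hxs
end
end

section
/- In the setting of the convergence theorem—δ_k → 0, ‖y − y_k‖_Y ≤ δ_k, α_k := α(δ_k) with α(δ) → 0 and δ²/α(δ) → 0, x† an x*-S-minimum-norm solution, and x_k a minimizer of J_{α_k,S,y_k} over D(F)—the following hold: (a) F(x_k) → y strongly in Y; (b) ‖x_k‖_{S⁻} → 0; and (c) limsup_{k→∞} ‖x_k − x*‖_{S⁺} ≤ ‖x† − x*‖_{S⁺}. -/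
open MeasureTheory Filter
open scoped RealInnerProductSpace ENNReal Topology

noncomputable section

/-!
Comparing the minimizer `x_k` with `x†` gives `J(x_k) ≤ J(x†) = ‖y − y_k‖² + α_k ‖x† − x*‖²_{S⁺}
≤ δ_k² + α_k ‖x† − x*‖²_{S⁺}`, because `x† − x*` vanishes off `S`. All three summands of `J(x_k)`
are nonnegative, so each is bounded by this quantity, which tends to zero; dividing the bound on
`α_k ‖x_k − x*‖²_{S⁺}` by `α_k` leaves `‖x† − x*‖²_{S⁺} + δ_k² / α_k`, whence (c).
-/

theorem tendsto_of_norm_sub_sq_le {ι E : Type*} [SeminormedAddCommGroup E] {l : Filter ι}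
    {u z : ι → E} {y : E} {b : ι → ℝ} (hub : ∀ k, ‖u k - z k‖ ^ 2 ≤ b k)
    (hb : Tendsto b l (𝓝 0)) (hz : Tendsto z l (𝓝 y)) : Tendsto u l (𝓝 y) := by
  have hsub : Tendsto (fun k => u k - z k) l (𝓝 0) :=
    squeeze_zero_norm (fun k => Real.le_sqrt_of_sq_le (hub k)) (by simpa using hb.sqrt)
  simpa using hsub.add hz

theorem eventually_sqrt_le_sqrt_add {ι : Type*} {l : Filter ι} {a r : ι → ℝ} {c : ℝ}
    (hle : ∀ k, a k ≤ c + r k) (hr : Tendsto r l (𝓝 0)) :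
    ∀ ε > (0 : ℝ), ∀ᶠ k in l, Real.sqrt (a k) ≤ Real.sqrt c + ε := by
  intro ε hε
  have hlim : Tendsto (fun k => Real.sqrt (c + r k)) l (𝓝 (Real.sqrt c)) := by
    simpa using (tendsto_const_nhds.add hr).sqrt
  filter_upwards [hlim.eventually (gt_mem_nhds (lt_add_of_pos_right _ hε))] with k hk
  exact (Real.sqrt_le_sqrt (hle k)).trans hk.le

section Tikhonov

variable {n : ℕ} {Ω S : Set (Fin n → ℝ)}

theorem sqInt_nonneg (T : Set (Fin n → ℝ)) (x : Lp ℝ 2 (volume.restrict Ω)) :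
    0 ≤ sqInt Ω T x :=
  integral_nonneg fun _ => sq_nonneg _

theorem sqInt_diff_sub_of_zeroOff {x x' : Lp ℝ 2 (volume.restrict Ω)} (hx' : ZeroOff Ω S x') :
    sqInt Ω (Ω \ S) (x - x') = sqInt Ω (Ω \ S) x := by
  refine integral_congr_ae ?_
  filter_upwards [ae_restrict_of_ae (Lp.coeFn_sub x x'), hx'] with t hsub hzero
  rw [hsub, Pi.sub_apply, hzero, sub_zero]

theorem sqInt_diff_eq_zero_of_zeroOff {x : Lp ℝ 2 (volume.restrict Ω)} (hx : ZeroOff Ω S x) :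
    sqInt Ω (Ω \ S) x = 0 := by
  refine integral_eq_zero_of_ae ?_
  filter_upwards [hx] with t hzero
  simp [hzero]

variable {Y : Type*} [NormedAddCommGroup Y] [InnerProductSpace ℝ Y]
  {F : Lp ℝ 2 (volume.restrict Ω) → Y} {xstar x : Lp ℝ 2 (volume.restrict Ω)} {α : ℝ} {z : Y}

theorem J_eq_of_zeroOff (hx : ZeroOff Ω S x) (hxstar : ZeroOff Ω S xstar) :
    J Ω F xstar α S z x = ‖F x - z‖ ^ 2 + α * sqInt Ω S (x - xstar) := by
  rw [J, sqInt_diff_sub_of_zeroOff hxstar, sqInt_diff_eq_zero_of_zeroOff hx, add_zero]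

theorem norm_sub_sq_le_J (hα : 0 ≤ α) : ‖F x - z‖ ^ 2 ≤ J Ω F xstar α S z x := by
  have := mul_nonneg hα (sqInt_nonneg S (x - xstar))
  have := sqInt_nonneg (Ω \ S) (x - xstar)
  rw [J]
  linarith

theorem sqInt_diff_sub_le_J (hα : 0 ≤ α) :
    sqInt Ω (Ω \ S) (x - xstar) ≤ J Ω F xstar α S z x := by
  have := mul_nonneg hα (sqInt_nonneg S (x - xstar))
  rw [J]
  nlinarith [sq_nonneg ‖F x - z‖]

theorem mul_sqInt_sub_le_J : α * sqInt Ω S (x - xstar) ≤ J Ω F xstar α S z x := by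
  have := sqInt_nonneg (Ω \ S) (x - xstar)
  rw [J]
  nlinarith [sq_nonneg ‖F x - z‖]

theorem IsMinimizer.J_le_of_isMNS {D : Set (Lp ℝ 2 (volume.restrict Ω))} {y : Y}
    {xdag : Lp ℝ 2 (volume.restrict Ω)} {δ : ℝ}
    (hx : IsMinimizer (J Ω F xstar α S z) D x) (hxstar : ZeroOff Ω S xstar)
    (hxdag : IsMNS Ω D F xstar S y xdag) (hz : ‖y - z‖ ≤ δ) :
    J Ω F xstar α S z x ≤ δ ^ 2 + α * sqInt Ω S (xdag - xstar) := by
  obtain ⟨hxdagD, hFxdag, hxdag0, -⟩ := hxdag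
  calc J Ω F xstar α S z x ≤ J Ω F xstar α S z xdag := hx.2 xdag hxdagD
    _ = ‖y - z‖ ^ 2 + α * sqInt Ω S (xdag - xstar) := by
      rw [J_eq_of_zeroOff hxdag0 hxstar, hFxdag]
    _ ≤ δ ^ 2 + α * sqInt Ω S (xdag - xstar) := by gcongr

end Tikhonov

/-- Part (c) is the `ε`-form of the `limsup` bound, which avoids the junk values of a real
`limsup`. -/
theorem convergence_auxiliary_estimates_general
    {n : ℕ} (Ω : Set (Fin n → ℝ))
    {Y : Type*} [NormedAddCommGroup Y] [InnerProductSpace ℝ Y]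
    (D : Set (Lp ℝ 2 (volume.restrict Ω)))
    (F : Lp ℝ 2 (volume.restrict Ω) → Y)
    (xstar : Lp ℝ 2 (volume.restrict Ω))
    (S : Set (Fin n → ℝ))
    (hxstar : ZeroOff Ω S xstar)
    (y : Y)
    (α : ℝ → ℝ) (hαpos : ∀ δ > (0 : ℝ), 0 < α δ)
    (hα0 : Tendsto α (𝓝[>] (0 : ℝ)) (𝓝 0))
    (hδ2α : Tendsto (fun δ => δ ^ 2 / α δ) (𝓝[>] (0 : ℝ)) (𝓝 0))
    (xdag : Lp ℝ 2 (volume.restrict Ω)) (hxdag : IsMNS Ω D F xstar S y xdag)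
    (δs : ℕ → ℝ) (hδpos : ∀ k, 0 < δs k) (hδ0 : Tendsto δs atTop (𝓝 0))
    (ys : ℕ → Y) (hys : ∀ k, ‖y - ys k‖ ≤ δs k)
    (xs : ℕ → Lp ℝ 2 (volume.restrict Ω))
    (hxs : ∀ k, IsMinimizer (J Ω F xstar (α (δs k)) S (ys k)) D (xs k)) :
    Tendsto (fun k => F (xs k)) atTop (𝓝 y) ∧
    Tendsto (fun k => Real.sqrt (sqInt Ω (Ω \ S) (xs k))) atTop (𝓝 0) ∧
    (∀ ε > (0 : ℝ), ∀ᶠ k in atTop,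
      Real.sqrt (sqInt Ω S (xs k - xstar)) ≤
        Real.sqrt (sqInt Ω S (xdag - xstar)) + ε) := by
  set c := sqInt Ω S (xdag - xstar)
  have hδ : Tendsto δs atTop (𝓝[>] 0) := tendsto_nhdsWithin_iff.2 ⟨hδ0, .of_forall hδpos⟩
  have hαk (k : ℕ) : 0 < α (δs k) := hαpos _ (hδpos k)
  have hJ (k : ℕ) : J Ω F xstar (α (δs k)) S (ys k) (xs k) ≤ δs k ^ 2 + α (δs k) * c :=
    (hxs k).J_le_of_isMNS hxstar hxdag (hys k)
  have hbound : Tendsto (fun k => δs k ^ 2 + α (δs k) * c) atTop (𝓝 0) := by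
    simpa using (hδ0.pow 2).add ((hα0.comp hδ).mul_const c)
  have hys_lim : Tendsto ys atTop (𝓝 y) :=
    tendsto_iff_norm_sub_tendsto_zero.2 <| squeeze_zero (fun _ => norm_nonneg _)
      (fun k => (norm_sub_rev _ _).trans_le (hys k)) hδ0
  refine ⟨?_, ?_, ?_⟩
  · exact tendsto_of_norm_sub_sq_le (fun k => (norm_sub_sq_le_J (hαk k).le).trans (hJ k))
      hbound hys_lim
  · have hoff : Tendsto (fun k => sqInt Ω (Ω \ S) (xs k)) atTop (𝓝 0) := by
      refine squeeze_zero (fun k => sqInt_nonneg _ _) (fun k => ?_) hbound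
      rw [← sqInt_diff_sub_of_zeroOff hxstar]
      exact (sqInt_diff_sub_le_J (hαk k).le).trans (hJ k)
    simpa using hoff.sqrt
  · refine eventually_sqrt_le_sqrt_add (fun k => ?_) (hδ2α.comp hδ)
    have hmul : sqInt Ω S (xs k - xstar) * α (δs k) ≤ δs k ^ 2 + α (δs k) * c := by
      rw [mul_comm]
      exact mul_sqInt_sub_le_J.trans (hJ k)
    rw [Function.comp_apply, ← sub_le_iff_le_add', le_div_iff₀ (hαk k)]
    linarith

/-- In the setting of the convergence theorem (Theorem A.3):
(a) `F(x_k) → y` strongly in `Y`; (b) `‖x_k‖_{S⁻} → 0`; and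
(c) `limsup_k ‖x_k − x*‖_{S⁺} ≤ ‖x† − x*‖_{S⁺}` (stated in the standard
`ε`-form to avoid junk values of real `limsup`). -/
theorem convergence_auxiliary_estimates
    {n : ℕ} (Ω : Set (Fin n → ℝ)) (hΩmeas : MeasurableSet Ω)
    (hΩbdd : Bornology.IsBounded Ω)
    {Y : Type*} [NormedAddCommGroup Y] [InnerProductSpace ℝ Y] [CompleteSpace Y]
    (D : Set (Lp ℝ 2 (volume.restrict Ω))) (hD : D.Nonempty)
    (F : Lp ℝ 2 (volume.restrict Ω) → Y)
    (hFcont : ContinuousOn F D)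
    (hFweak : ∀ (u : ℕ → Lp ℝ 2 (volume.restrict Ω))
      (x : Lp ℝ 2 (volume.restrict Ω)) (z : Y),
      (∀ k, u k ∈ D) → WeakConv u x → WeakConv (fun k => F (u k)) z →
        x ∈ D ∧ F x = z)
    (xstar : Lp ℝ 2 (volume.restrict Ω))
    (S : Set (Fin n → ℝ)) (hSmeas : MeasurableSet S) (hSΩ : S ⊆ Ω)
    (hxstar : ZeroOff Ω S xstar)
    (y : Y)
    (α : ℝ → ℝ) (hαpos : ∀ δ > (0 : ℝ), 0 < α δ)
    (hα0 : Tendsto α (𝓝[>] (0 : ℝ)) (𝓝 0))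
    (hδ2α : Tendsto (fun δ => δ ^ 2 / α δ) (𝓝[>] (0 : ℝ)) (𝓝 0))
    (xdag : Lp ℝ 2 (volume.restrict Ω)) (hxdag : IsMNS Ω D F xstar S y xdag)
    (δs : ℕ → ℝ) (hδpos : ∀ k, 0 < δs k) (hδ0 : Tendsto δs atTop (𝓝 0))
    (ys : ℕ → Y) (hys : ∀ k, ‖y - ys k‖ ≤ δs k)
    (xs : ℕ → Lp ℝ 2 (volume.restrict Ω))
    (hxs : ∀ k, IsMinimizer (J Ω F xstar (α (δs k)) S (ys k)) D (xs k)) :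
    Tendsto (fun k => F (xs k)) atTop (𝓝 y) ∧
    Tendsto (fun k => Real.sqrt (sqInt Ω (Ω \ S) (xs k))) atTop (𝓝 0) ∧
    (∀ ε > (0 : ℝ), ∀ᶠ k in atTop,
      Real.sqrt (sqInt Ω S (xs k - xstar)) ≤
        Real.sqrt (sqInt Ω S (xdag - xstar)) + ε) :=
  convergence_auxiliary_estimates_general Ω D F xstar S hxstar y α hαpos hα0 hδ2α xdag hxdag δs
    hδpos hδ0 ys hys xs hxs
end
end

section
/- (Basic inequality for minimizers.) Let y ∈ Y, let x† ∈ D(F) satisfy F(x†) = y and x† = 0 a.e. on Ω∖S, assume x* = 0 a.e. on Ω∖S, let y^δ ∈ Y with ‖y − y^δ‖_Y ≤ δ, and let α > 0. Then every minimizer x of J_{α,S,y^δ} over D(F) satisfies ‖F(x) − y^δ‖_Y² + α‖x − x†‖_{S⁺}² + ‖x − x†‖_{S⁻}² ≤ δ² + 2α⟨x† − x*, x† − x⟩_{L²(Ω)}. -/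
open MeasureTheory Filter
open scoped RealInnerProductSpace ENNReal Topology

noncomputable section

/-! Compare `J` at the minimizer `x` with `J` at `x†`. Split `x − x* = (x − x†) + (x† − x*)`;
since `x† − x*` vanishes off `S`, the `Ω ∖ S` part of `J(x)` is that of `x − x†`, the cross term
over `S` is the full `L²` inner product, and `J(x†) = ‖y − y^δ‖² + α‖x† − x*‖²_{S⁺}`. The
`S⁺` mass of `x† − x*` then cancels from `J(x) ≤ J(x†)`, which rearranges to the claim. -/

section

variable {α : Type*} [MeasurableSpace α] {μ : Measure α}

namespace MeasureTheory.Measure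

theorem restrict_restrict_compl_eq_restrict_diff (Ω : Set α) {S : Set α}
    (hS : MeasurableSet S) : (μ.restrict Ω).restrict Sᶜ = (μ.restrict Ω).restrict (Ω \ S) := by
  rw [restrict_restrict hS.compl, restrict_restrict_of_subset Set.sdiff_subset,
    Set.sdiff_eq_compl_inter]

end MeasureTheory.Measure

namespace MeasureTheory.L2

theorem integrable_mul (f g : Lp ℝ 2 μ) : Integrable (fun t => f t * g t) μ := by
  simpa [mul_comm] using integrable_inner (𝕜 := ℝ) f g

theorem inner_eq_integral_mul (f g : Lp ℝ 2 μ) : ⟪f, g⟫ = ∫ t, f t * g t ∂μ := by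
  simpa [mul_comm] using inner_def (𝕜 := ℝ) f g

theorem setIntegral_sq_add (f g : Lp ℝ 2 μ) (T : Set α) :
    ∫ t in T, (f + g) t ^ 2 ∂μ =
      ∫ t in T, f t ^ 2 ∂μ + 2 * ∫ t in T, f t * g t ∂μ + ∫ t in T, g t ^ 2 ∂μ := by
  have hff := (integrable_mul f f).integrableOn (s := T)
  have hfg := ((integrable_mul f g).const_mul 2).integrableOn (s := T)
  have hffg : IntegrableOn (fun t => f t * f t + 2 * (f t * g t)) T μ := hff.add hfg
  have hgg := (integrable_mul g g).integrableOn (s := T)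
  calc ∫ t in T, (f + g) t ^ 2 ∂μ
      = ∫ t in T, (f t * f t + 2 * (f t * g t) + g t * g t) ∂μ := by
        refine integral_congr_ae ?_
        filter_upwards [ae_restrict_of_ae (Lp.coeFn_add f g)] with t ht
        rw [ht, Pi.add_apply]
        ring
    _ = _ := by
        rw [integral_add hffg hgg, integral_add hff hfg, integral_const_mul]
        simp only [sq]

theorem setIntegral_sq_add_of_ae_eq_zero (f : Lp ℝ 2 μ) {g : Lp ℝ 2 μ} {T : Set α}
    (hg : ∀ᵐ t ∂μ.restrict T, g t = 0) :
    ∫ t in T, (f + g) t ^ 2 ∂μ = ∫ t in T, f t ^ 2 ∂μ := by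
  refine integral_congr_ae ?_
  filter_upwards [ae_restrict_of_ae (Lp.coeFn_add f g), hg] with t hsum hgt
  rw [hsum, Pi.add_apply, hgt, add_zero]

theorem setIntegral_sq_eq_zero_of_ae_eq_zero {g : Lp ℝ 2 μ} {T : Set α}
    (hg : ∀ᵐ t ∂μ.restrict T, g t = 0) : ∫ t in T, g t ^ 2 ∂μ = 0 :=
  integral_eq_zero_of_ae (by filter_upwards [hg] with t ht; simp [ht])

theorem setIntegral_mul_eq_inner (f : Lp ℝ 2 μ) {g : Lp ℝ 2 μ} {T : Set α}
    (hT : MeasurableSet T) (hg : ∀ᵐ t ∂μ.restrict Tᶜ, g t = 0) :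
    ∫ t in T, f t * g t ∂μ = ⟪f, g⟫ := by
  have hcompl : ∫ t in Tᶜ, f t * g t ∂μ = 0 :=
    integral_eq_zero_of_ae (by filter_upwards [hg] with t ht; simp [ht])
  rw [inner_eq_integral_mul, ← integral_add_compl hT (integrable_mul f g), hcompl, add_zero]

end MeasureTheory.L2

end

section ZeroOff

variable {n : ℕ} {Ω S : Set (Fin n → ℝ)} {x x' : Lp ℝ 2 (volume.restrict Ω)}

theorem ZeroOff.sub_s7 (hx : ZeroOff Ω S x) (hx' : ZeroOff Ω S x') : ZeroOff Ω S (x - x') := by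
  filter_upwards [ae_restrict_of_ae (Lp.coeFn_sub x x'), hx, hx'] with t hsub h h'
  rw [hsub, Pi.sub_apply, h, h', sub_zero]

theorem ZeroOff.ae_restrict_compl (hS : MeasurableSet S) (hx : ZeroOff Ω S x) :
    ∀ᵐ t ∂(volume.restrict Ω).restrict Sᶜ, x t = 0 := by
  rwa [Measure.restrict_restrict_compl_eq_restrict_diff Ω hS]

end ZeroOff

theorem basic_inequality_for_minimizers_general
    {n : ℕ} (Ω : Set (Fin n → ℝ))
    {Y : Type*} [NormedAddCommGroup Y] [InnerProductSpace ℝ Y]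
    (D : Set (Lp ℝ 2 (volume.restrict Ω)))
    (F : Lp ℝ 2 (volume.restrict Ω) → Y)
    (xstar : Lp ℝ 2 (volume.restrict Ω))
    (S : Set (Fin n → ℝ)) (hSmeas : MeasurableSet S)
    (hxstar : ZeroOff Ω S xstar)
    (y : Y)
    (xdag : Lp ℝ 2 (volume.restrict Ω)) (hxdagD : xdag ∈ D)
    (hxdagF : F xdag = y) (hxdag0 : ZeroOff Ω S xdag)
    (δ : ℝ) (yδ : Y) (hyδ : ‖y - yδ‖ ≤ δ)
    (α : ℝ)
    (x : Lp ℝ 2 (volume.restrict Ω))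
    (hx : IsMinimizer (J Ω F xstar α S yδ) D x) :
    ‖F x - yδ‖ ^ 2 + α * sqInt Ω S (x - xdag) + sqInt Ω (Ω \ S) (x - xdag) ≤
      δ ^ 2 + 2 * α * ⟪xdag - xstar, xdag - x⟫ := by
  set a := x - xdag
  set b := xdag - xstar
  have hb : ZeroOff Ω S b := hxdag0.sub_s7 hxstar
  have hsplit : x - xstar = a + b := (sub_add_sub_cancel x xdag xstar).symm
  have hJx : J Ω F xstar α S yδ x = ‖F x - yδ‖ ^ 2 +
      (α * (sqInt Ω S a + 2 * ⟪a, b⟫ + sqInt Ω S b) + sqInt Ω (Ω \ S) a) := by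
    rw [J, hsplit, sqInt, L2.setIntegral_sq_add,
      L2.setIntegral_mul_eq_inner a hSmeas (hb.ae_restrict_compl hSmeas), sqInt,
      L2.setIntegral_sq_add_of_ae_eq_zero a hb]
    rfl
  have hJxdag : J Ω F xstar α S yδ xdag = ‖y - yδ‖ ^ 2 + α * sqInt Ω S b := by
    have hb0 : sqInt Ω (Ω \ S) b = 0 := L2.setIntegral_sq_eq_zero_of_ae_eq_zero hb
    rw [J, hxdagF, hb0, add_zero]
  have hinner : ⟪b, xdag - x⟫ = -⟪a, b⟫ := by
    rw [← neg_sub x xdag, inner_neg_right, real_inner_comm]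
  have hδ : ‖y - yδ‖ ^ 2 ≤ δ ^ 2 := pow_le_pow_left₀ (norm_nonneg _) hyδ 2
  have hmin := hx.2 xdag hxdagD
  rw [hJx, hJxdag] at hmin
  rw [hinner]
  linarith

/-- **Basic inequality for minimizers**: if `F(x†) = y`, `x† = 0` a.e. on
`Ω ∖ S`, `x* = 0` a.e. on `Ω ∖ S`, and `‖y − y^δ‖ ≤ δ`, then every minimizer
`x` of `J_{α,S,y^δ}` over `D(F)` satisfies
`‖F(x) − y^δ‖² + α‖x − x†‖_{S⁺}² + ‖x − x†‖_{S⁻}² ≤ δ² + 2α⟨x† − x*, x† − x⟩`. -/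
theorem basic_inequality_for_minimizers
    {n : ℕ} (Ω : Set (Fin n → ℝ)) (hΩmeas : MeasurableSet Ω)
    (hΩbdd : Bornology.IsBounded Ω)
    {Y : Type*} [NormedAddCommGroup Y] [InnerProductSpace ℝ Y] [CompleteSpace Y]
    (D : Set (Lp ℝ 2 (volume.restrict Ω))) (hD : D.Nonempty)
    (F : Lp ℝ 2 (volume.restrict Ω) → Y)
    (hFcont : ContinuousOn F D)
    (hFweak : ∀ (u : ℕ → Lp ℝ 2 (volume.restrict Ω))
      (x : Lp ℝ 2 (volume.restrict Ω)) (z : Y),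
      (∀ k, u k ∈ D) → WeakConv u x → WeakConv (fun k => F (u k)) z →
        x ∈ D ∧ F x = z)
    (xstar : Lp ℝ 2 (volume.restrict Ω))
    (S : Set (Fin n → ℝ)) (hSmeas : MeasurableSet S) (hSΩ : S ⊆ Ω)
    (hxstar : ZeroOff Ω S xstar)
    (y : Y)
    (xdag : Lp ℝ 2 (volume.restrict Ω)) (hxdagD : xdag ∈ D)
    (hxdagF : F xdag = y) (hxdag0 : ZeroOff Ω S xdag)
    (δ : ℝ) (yδ : Y) (hyδ : ‖y - yδ‖ ≤ δ)
    (α : ℝ) (hα : 0 < α)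
    (x : Lp ℝ 2 (volume.restrict Ω))
    (hx : IsMinimizer (J Ω F xstar α S yδ) D x) :
    ‖F x - yδ‖ ^ 2 + α * sqInt Ω S (x - xdag) + sqInt Ω (Ω \ S) (x - xdag) ≤
      δ ^ 2 + 2 * α * ⟪xdag - xstar, xdag - x⟫ :=
  basic_inequality_for_minimizers_general Ω D F xstar S hSmeas hxstar y xdag hxdagD hxdagF hxdag0 δ
    yδ hyδ α x hx
end
end
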